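/- The group G presented by ⟨a, b ∣ a² = b²⟩ has a free abelian subgroup of rank 2 and index 4; that is, there exists a subgroup H of G with Subgroup.index H = 4 and H isomorphic as a group to ℤ × ℤ (viewed multiplicatively). -/
import Mathlib

def rels : Set (FreeGroup (Fin 2)) :=
  {FreeGroup.of 0 * FreeGroup.of 0 * (FreeGroup.of 1)⁻¹ * (FreeGroup.of 1)⁻¹}

namespace KleinAux

open Multiplicative SemidirectProduct

abbrev Z : Type := Multiplicative ℤ

def ι : MulAut Z := MulEquiv.inv Z

lemma ι_apply (y : Z) : ι y = y⁻¹ := rfl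

lemma ι_mul_ι : ι * ι = 1 := by
  ext y
  simp [MulAut.mul_apply, ι_apply]

lemma ι_zpow_even (j : ℤ) : ι ^ (2 * j) = 1 := by
  rw [zpow_mul, show (ι ^ (2:ℤ)) = ι * ι by rw [zpow_two], ι_mul_ι, one_zpow]

lemma ι_sq : ι ^ (2:ℕ) = 1 := by rw [sq, ι_mul_ι]

lemma ι_zsq : ι ^ (2:ℤ) = 1 := by rw [zpow_two, ι_mul_ι]

lemma ι_inv : ι⁻¹ = ι := inv_eq_of_mul_eq_one_right ι_mul_ι

def φK : Z →* MulAut Z := zpowersHom _ ι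

lemma φK_apply (g : Z) : φK g = ι ^ g.toAdd := rfl

lemma φK_cases (g : Z) : φK g = 1 ∨ φK g = ι := by
  rcases Int.even_or_odd g.toAdd with ⟨j, hj⟩ | ⟨j, hj⟩
  · left; rw [φK_apply, show g.toAdd = 2 * j by omega, ι_zpow_even]
  · right; rw [φK_apply, hj, zpow_add, ι_zpow_even, one_mul, zpow_one]

abbrev K : Type := SemidirectProduct Z Z φK

/-! ### Generators of the presented group -/

def A : PresentedGroup rels := .of 0
def B : PresentedGroup rels := .of 1
def Y : PresentedGroup rels := A * B⁻¹

lemma relator_eq_one : A * A * B⁻¹ * B⁻¹ = 1 := by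
  have : PresentedGroup.mk rels
      (FreeGroup.of 0 * FreeGroup.of 0 * (FreeGroup.of 1)⁻¹ * (FreeGroup.of 1)⁻¹) = 1 := by
    have h : (FreeGroup.of 0 * FreeGroup.of 0 * (FreeGroup.of 1)⁻¹ * (FreeGroup.of 1)⁻¹ :
        FreeGroup (Fin 2)) ∈ Subgroup.normalClosure rels :=
      Subgroup.subset_normalClosure (Set.mem_singleton _)
    exact (QuotientGroup.eq_one_iff _).mpr h
  simpa [A, B, PresentedGroup.of, map_mul, map_inv] using this

lemma rel_AB : A * A = B * B := by
  have h := relator_eq_one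
  have : A * A * B⁻¹ * B⁻¹ * B * B = 1 * B * B := by rw [h]
  simpa [mul_assoc] using this

lemma conj_Y : A * Y * A⁻¹ = Y⁻¹ := by
  have h := rel_AB
  calc A * Y * A⁻¹ = (A * A) * (B⁻¹ * A⁻¹) := by rw [Y]; group
    _ = (B * B) * (B⁻¹ * A⁻¹) := by rw [h]
    _ = B * A⁻¹ := by group
    _ = Y⁻¹ := by rw [Y]; group

lemma conj_Y_inv : A * Y⁻¹ * A⁻¹ = Y := by
  calc A * Y⁻¹ * A⁻¹ = (A * Y * A⁻¹)⁻¹ := by group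
    _ = Y := by rw [conj_Y, inv_inv]

lemma commute_AA_Y : Commute (A * A) Y := by
  have h : (A * A) * Y * (A * A)⁻¹ = Y := by
    calc (A * A) * Y * (A * A)⁻¹ = A * (A * Y * A⁻¹) * A⁻¹ := by group
      _ = A * Y⁻¹ * A⁻¹ := by rw [conj_Y]
      _ = Y := conj_Y_inv
  calc (A * A) * Y = ((A * A) * Y * (A * A)⁻¹) * (A * A) := by group
    _ = Y * (A * A) := by rw [h]

lemma commute_even_Y (j : ℤ) : Commute (A ^ (2 * j : ℤ)) Y := by
  rw [zpow_mul, show (A ^ (2:ℤ)) = A * A from zpow_two A]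
  exact commute_AA_Y.zpow_left j

/-- The homomorphism `K →* PresentedGroup rels`. -/
noncomputable def ψ : K →* PresentedGroup rels :=
  SemidirectProduct.lift (zpowersHom _ Y) (zpowersHom _ A) (by
    intro g
    apply MonoidHom.ext_mint
    simp only [MonoidHom.comp_apply, MulEquiv.coe_toMonoidHom, MulAut.conj_apply,
      zpowersHom_apply]
    rcases Int.even_or_odd g.toAdd with ⟨j, hj⟩ | ⟨j, hj⟩
    · have hg : φK g = 1 := by
        rw [φK_apply, show g.toAdd = 2 * j by omega, ι_zpow_even]
      rw [hg]
      have hc := commute_even_Y j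
      simp only [MulAut.one_apply, toAdd_ofAdd, zpow_one]
      rw [show g.toAdd = 2 * j by omega]
      rw [hc.eq, mul_inv_cancel_right]
    · have hg : φK g = ι := by
        rw [φK_apply, hj, zpow_add, ι_zpow_even, one_mul, zpow_one]
      rw [hg, hj]
      have hc := (commute_even_Y j).inv_right
      calc Y ^ (ι (ofAdd 1)).toAdd = Y⁻¹ := by
            rw [ι_apply]; simp
        _ = A ^ (2*j:ℤ) * Y⁻¹ * (A ^ (2*j:ℤ))⁻¹ := by rw [hc.eq, mul_inv_cancel_right]
        _ = A ^ (2*j:ℤ) * (A * Y * A⁻¹) * (A ^ (2*j:ℤ))⁻¹ := by rw [conj_Y]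
        _ = A ^ (2*j+1:ℤ) * Y * (A ^ (2*j+1:ℤ))⁻¹ := by rw [zpow_add, zpow_one]; group)

@[simp] lemma ψ_inl (y : Z) : ψ (inl y) = Y ^ y.toAdd := by simp [ψ, zpowersHom_apply]
@[simp] lemma ψ_inr (x : Z) : ψ (inr x) = A ^ x.toAdd := by simp [ψ, zpowersHom_apply]

/-- Images of the generators in `K`. -/
def fgen : Fin 2 → K := ![inr (ofAdd 1), inl (ofAdd (-1)) * inr (ofAdd 1)]

lemma fgen_rel : ∀ r ∈ rels, FreeGroup.lift fgen r = 1 := by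
  intro r hr
  rw [rels, Set.mem_singleton_iff] at hr
  subst hr
  simp only [map_mul, map_inv, FreeGroup.lift_apply_of, fgen]
  ext
  · simp [mul_left, inv_left, mul_right, inv_right, φK_apply, ι_apply, ι_sq, ι_zsq, ι_inv]
  · simp [mul_left, inv_left, mul_right, inv_right, φK_apply, ι_apply, ι_sq, ι_zsq, ι_inv]

/-- The homomorphism `PresentedGroup rels →* K`. -/
def χ : PresentedGroup rels →* K := PresentedGroup.toGroup fgen_rel

lemma χ_A : χ A = inr (ofAdd 1) := PresentedGroup.toGroup.of fgen_rel
lemma χ_B : χ B = inl (ofAdd (-1)) * inr (ofAdd 1) := PresentedGroup.toGroup.of fgen_rel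

lemma χ_Y : χ Y = inl (ofAdd 1) := by
  rw [Y, map_mul, map_inv, χ_A, χ_B]
  ext
  · simp [mul_left, inv_left, mul_right, inv_right, φK_apply, ι_apply, ι_sq, ι_zsq, ι_inv]
  · simp [mul_left, inv_left, mul_right, inv_right, φK_apply, ι_apply, ι_sq, ι_zsq, ι_inv]

lemma ψ_comp_χ : ψ.comp χ = MonoidHom.id _ := by
  apply PresentedGroup.ext
  intro x
  fin_cases x
  · show ψ (χ A) = A
    rw [χ_A, ψ_inr]; simp
  · show ψ (χ B) = B
    rw [χ_B, map_mul, ψ_inl, ψ_inr]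
    simp only [toAdd_ofAdd, zpow_neg, zpow_one]
    rw [Y]; group

lemma χ_comp_ψ : χ.comp ψ = MonoidHom.id _ := by
  apply SemidirectProduct.hom_ext
  · apply MonoidHom.ext_mint
    simp only [MonoidHom.comp_apply, MonoidHom.id_apply, ψ_inl, toAdd_ofAdd, zpow_one]
    exact χ_Y
  · apply MonoidHom.ext_mint
    simp only [MonoidHom.comp_apply, MonoidHom.id_apply, ψ_inr, toAdd_ofAdd, zpow_one]
    exact χ_A

/-- The isomorphism between the presented group and the Klein bottle group `K`. -/
noncomputable def e : PresentedGroup rels ≃* K := χ.toMulEquiv ψ ψ_comp_χ χ_comp_ψ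

/-! ### The index-4 subgroup -/

abbrev T : Type := Multiplicative (ZMod 2) × Multiplicative (ZMod 2)

def c : Z →* Multiplicative (ZMod 2) :=
  AddMonoidHom.toMultiplicative (Int.castAddHom (ZMod 2))

lemma c_apply (y : Z) : c y = ofAdd ((y.toAdd : ℤ) : ZMod 2) := rfl

lemma T2_inv : ∀ t : Multiplicative (ZMod 2), t⁻¹ = t := by decide

lemma c_comp_φK (g : Z) (y : Z) : c ((φK g) y) = c y := by
  rcases φK_cases g with h | h
  · rw [h]; rfl
  · rw [h, ι_apply, map_inv, T2_inv]

def μ : K →* T where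
  toFun k := (c k.left, c k.right)
  map_one' := by
    simp [one_left, one_right]
  map_mul' a b := by
    rw [Prod.ext_iff]
    constructor
    · show c ((a * b).left) = c a.left * c b.left
      rw [mul_left, map_mul, c_comp_φK]
    · show c ((a * b).right) = c a.right * c b.right
      rw [mul_right, map_mul]

lemma μ_apply (k : K) : μ k = (c k.left, c k.right) := rfl

lemma μ_surjective : Function.Surjective μ := by
  rintro ⟨t1, t2⟩
  obtain ⟨m, hm⟩ := ZMod.intCast_surjective t1.toAdd
  obtain ⟨n, hn⟩ := ZMod.intCast_surjective t2.toAdd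
  refine ⟨⟨ofAdd m, ofAdd n⟩, ?_⟩
  rw [μ_apply]
  ext
  · show ((c (ofAdd m)).toAdd : ZMod 2) = t1.toAdd
    simpa [c_apply] using hm
  · show ((c (ofAdd n)).toAdd : ZMod 2) = t2.toAdd
    simpa [c_apply] using hn

lemma μ_ker_index : μ.ker.index = 4 := by
  rw [Subgroup.index_ker, MonoidHom.range_eq_top_of_surjective μ μ_surjective,
    Subgroup.card_top]
  simp [Nat.card_eq_fintype_card]

lemma φK_pow_two (y : Z) : φK (y ^ (2:ℕ)) = 1 := by
  rw [φK_apply, toAdd_pow, show ((2:ℕ) • y.toAdd) = 2 * y.toAdd by rw [nsmul_eq_mul]; norm_num, ι_zpow_even]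

def θ : Z × Z →* K where
  toFun p := ⟨p.1 ^ (2:ℕ), p.2 ^ (2:ℕ)⟩
  map_one' := by
    ext <;> simp
  map_mul' p q := by
    ext
    · show ((p.1 * q.1) ^ (2:ℕ)) = p.1 ^ (2:ℕ) * (φK (p.2 ^ (2:ℕ))) (q.1 ^ (2:ℕ))
      rw [φK_pow_two, mul_pow]; rfl
    · show ((p.2 * q.2) ^ (2:ℕ)) = p.2 ^ (2:ℕ) * q.2 ^ (2:ℕ)
      rw [mul_pow]

lemma θ_apply (p : Z × Z) : θ p = ⟨p.1 ^ (2:ℕ), p.2 ^ (2:ℕ)⟩ := rfl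

lemma θ_injective : Function.Injective θ := by
  rw [injective_iff_map_eq_one]
  rintro ⟨y, x⟩ h
  rw [θ_apply, SemidirectProduct.ext_iff] at h
  obtain ⟨h1, h2⟩ := h
  have hy : (2:ℕ) • y.toAdd = 0 := by rw [← toAdd_pow]; exact congrArg toAdd h1
  have hx : (2:ℕ) • x.toAdd = 0 := by rw [← toAdd_pow]; exact congrArg toAdd h2
  rw [nsmul_eq_mul] at hy hx
  have : y.toAdd = 0 := by omega
  have : x.toAdd = 0 := by omega
  ext <;> simp_all

lemma θ_range : θ.range = μ.ker := by
  ext k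
  constructor
  · rintro ⟨p, rfl⟩
    rw [MonoidHom.mem_ker, θ_apply, μ_apply]
    have hsq : ∀ t : Multiplicative (ZMod 2), t ^ (2:ℕ) = 1 := by decide
    have : ∀ y : Z, c (y ^ (2:ℕ)) = 1 := by
      intro y
      rw [map_pow, hsq]
    simp only [this]
    rfl
  · intro hk
    rw [MonoidHom.mem_ker, μ_apply, Prod.ext_iff] at hk
    obtain ⟨h1, h2⟩ := hk
    rw [c_apply] at h1 h2
    have h1' : ((k.left.toAdd : ℤ) : ZMod 2) = 0 := congrArg toAdd h1
    have h2' : ((k.right.toAdd : ℤ) : ZMod 2) = 0 := congrArg toAdd h2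
    obtain ⟨j, hj⟩ := (ZMod.intCast_zmod_eq_zero_iff_dvd _ 2).mp h1'
    obtain ⟨l, hl⟩ := (ZMod.intCast_zmod_eq_zero_iff_dvd _ 2).mp h2'
    refine ⟨(ofAdd j, ofAdd l), ?_⟩
    rw [θ_apply]
    ext
    · show ((ofAdd j) ^ (2:ℕ)).toAdd = k.left.toAdd
      rw [toAdd_pow]; simpa using hj.symm
    · show ((ofAdd l) ^ (2:ℕ)).toAdd = k.right.toAdd
      rw [toAdd_pow]; simpa using hl.symm

end KleinAux

open KleinAux in
/-- The group `G = ⟨a, b ∣ a² = b²⟩` has a free abelian subgroup of rank 2 and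
index 4. -/
theorem exists_free_abelian_subgroup_index_four :
    ∃ H : Subgroup (PresentedGroup rels),
      H.index = 4 ∧ Nonempty (H ≃* Multiplicative (ℤ × ℤ)) := by
  refine ⟨Subgroup.map e.symm.toMonoidHom μ.ker, ?_, ?_⟩
  · rw [Subgroup.map_equiv_eq_comap_symm', MulEquiv.symm_symm]
    rw [Subgroup.index_comap_of_surjective μ.ker
      (show Function.Surjective e.toMonoidHom from e.surjective)]
    exact μ_ker_index
  · exact ⟨((MulEquiv.subgroupMap e.symm μ.ker).symm.trans
      ((MulEquiv.subgroupCongr θ_range).symm.trans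
        ((MonoidHom.ofInjective θ_injective).symm.trans (MulEquiv.prodMultiplicative (G := ℤ) (H := ℤ)).symm)))⟩
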